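/- arXiv:2109.10997 — 8 statements merged into one kernel-verified Lean document; each statement's English description precedes it below -/
import Mathlib

section
/- Let p0, p1, p2, p3 be nonnegative reals with p0 + p1 + p2 + p3 = 1, p3 > 0, and p1 + 2*p2 + 3*p3 < 1 (subcriticality). Define f(y) = p0 + p1*y + p2*y^2 + p3*y^3 and D = 4*p0*p3 + (p2+p3)^2. Then the integral over [0,1] of (1-y)/(f(y)-y) with respect to y equals (1/sqrt(D)) * log((2*p0 - p2 - p3 + sqrt(D))/(2*p0 - p2 - p3 - sqrt(D))). -/
/-!
Since `f 1 = 1`, `f y - y = (1 - y) q y` with `q y = p0 - (p2 + p3) y - p3 y ^ 2`, so the integrand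
is `1 / q` off `y = 1`. Subcriticality gives `q 0 > 0` and `q 1 > 0`; as `q` is a concave quadratic,
`[0, 1]` lies strictly between its roots `b < 0 < 1 < a`, and the partial fraction decomposition of
`1 / ((a - y) (y - b))` integrates to a logarithm.
-/

open Real Set

theorem integral_one_div_sub_mul_sub {a b u v : ℝ} (hu : u ∈ Ioo b a) (hv : v ∈ Ioo b a) :
    ∫ y in u..v, 1 / ((a - y) * (y - b)) =
      1 / (a - b) * log ((a - u) * (v - b) / ((a - v) * (u - b))) := by
  have hsub : uIcc u v ⊆ Ioo b a := ordConnected_Ioo.uIcc_subset hu hv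
  have hderiv : ∀ y ∈ uIcc u v, HasDerivAt (fun y => 1 / (a - b) * (log (y - b) - log (a - y)))
      (1 / ((a - y) * (y - b))) y := by
    intro y hy
    obtain ⟨hby, hya⟩ := hsub hy
    have hlog₁ : HasDerivAt (fun y => log (y - b)) (1 / (y - b)) y :=
      ((hasDerivAt_id' y).sub_const b).log (by linarith)
    have hlog₂ : HasDerivAt (fun y => log (a - y)) (-1 / (a - y)) y :=
      ((hasDerivAt_id' y).const_sub a).log (by linarith)
    refine ((hlog₁.sub hlog₂).const_mul (1 / (a - b))).congr_deriv ?_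
    field_simp [sub_ne_zero.2 hby.ne', sub_ne_zero.2 hya.ne,
      sub_ne_zero.2 (hby.trans hya).ne']
    ring
  have hcont : ContinuousOn (fun y => 1 / ((a - y) * (y - b))) (uIcc u v) := by
    refine continuousOn_const.div (by fun_prop) fun y hy => ?_
    obtain ⟨hby, hya⟩ := hsub hy
    exact mul_ne_zero (by linarith) (by linarith)
  rw [intervalIntegral.integral_eq_sub_of_hasDerivAt hderiv (hcont.intervalIntegrable),
    log_div, log_mul, log_mul]
  · ring
  all_goals nlinarith [hu.1, hu.2, hv.1, hv.2]

theorem integral_one_div_quadratic {q₀ c p s : ℝ} (hp : 0 < p) (hs : 0 ≤ s)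
    (hsq : s ^ 2 = 4 * q₀ * p + c ^ 2) (hq₀ : 0 < q₀) (hq₁ : 0 < q₀ - c - p) :
    ∫ y in (0:ℝ)..1, 1 / (q₀ - c * y - p * y ^ 2) =
      1 / s * log ((2 * q₀ - c + s) / (2 * q₀ - c - s)) := by
  set a := (s - c) / (2 * p)
  set b := -(c + s) / (2 * p)
  have hfac : ∀ y, q₀ - c * y - p * y ^ 2 = p * ((a - y) * (y - b)) := fun y => by
    simp only [a, b]
    field_simp
    linear_combination (-1) * hsq
  have hab : p * (a - b) = s := by
    simp only [a, b]
    field_simp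
    ring
  have hba : b ≤ a := by nlinarith
  -- `q 0 = p a (-b) > 0` and `q 1 = p (a - 1) (1 - b) > 0` place `0` and `1` between the roots.
  have hb : b < 0 := by
    have := hfac 0
    by_contra! hb
    nlinarith [mul_nonneg hb (hb.trans hba)]
  have ha : 1 < a := by
    have := hfac 1
    nlinarith [mul_pos hp (by linarith : (0:ℝ) < 1 - b)]
  have hinv : ∀ y, 1 / (q₀ - c * y - p * y ^ 2) = 1 / p * (1 / ((a - y) * (y - b))) :=
    fun y => by rw [hfac, one_div_mul_one_div]
  simp_rw [hinv, intervalIntegral.integral_const_mul]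
  rw [integral_one_div_sub_mul_sub ⟨hb, by linarith⟩ ⟨by linarith, ha⟩, ← mul_assoc,
    one_div_mul_one_div, hab]
  congr 2
  rw [div_eq_div_iff (by nlinarith) (by nlinarith)]
  simp only [a, b]
  field_simp
  linear_combination (-2 * s) * hsq

theorem stmt_2_general (p0 p1 p2 p3 : ℝ) (h2 : 0 ≤ p2) (h3 : 0 < p3)
    (hsum : p0 + p1 + p2 + p3 = 1) (hsub : p1 + 2 * p2 + 3 * p3 < 1)
    (D : ℝ) (hD : D = 4 * p0 * p3 + (p2 + p3) ^ 2) :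
    ∫ y in (0:ℝ)..1, (1 - y) / ((p0 + p1 * y + p2 * y ^ 2 + p3 * y ^ 3) - y)
      = (1 / Real.sqrt D) *
        Real.log ((2 * p0 - p2 - p3 + Real.sqrt D) / (2 * p0 - p2 - p3 - Real.sqrt D)) := by
  have hq₀ : 0 < p0 := by linarith
  have hq₁ : 0 < p0 - (p2 + p3) - p3 := by linarith
  have hsq : sqrt D ^ 2 = 4 * p0 * p3 + (p2 + p3) ^ 2 := by
    rw [sq_sqrt (by nlinarith), hD]
  have hfac : ∀ y, p0 + p1 * y + p2 * y ^ 2 + p3 * y ^ 3 - y =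
      (1 - y) * (p0 - (p2 + p3) * y - p3 * y ^ 2) := fun y => by
    linear_combination y * hsum
  rw [intervalIntegral.integral_congr_Ioo_of_le zero_le_one fun y hy => ?_,
    integral_one_div_quadratic h3 (sqrt_nonneg D) hsq hq₀ hq₁]
  · simp only [sub_add_eq_sub_sub]
  · rw [hfac, div_mul_cancel_left₀ (by linarith [hy.2]), one_div]

theorem stmt_2 (p0 p1 p2 p3 : ℝ) (h0 : 0 ≤ p0) (h1 : 0 ≤ p1) (h2 : 0 ≤ p2) (h3 : 0 < p3)
    (hsum : p0 + p1 + p2 + p3 = 1) (hsub : p1 + 2 * p2 + 3 * p3 < 1)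
    (D : ℝ) (hD : D = 4 * p0 * p3 + (p2 + p3) ^ 2) :
    ∫ y in (0:ℝ)..1, (1 - y) / ((p0 + p1 * y + p2 * y ^ 2 + p3 * y ^ 3) - y)
      = (1 / Real.sqrt D) *
        Real.log ((2 * p0 - p2 - p3 + Real.sqrt D) / (2 * p0 - p2 - p3 - Real.sqrt D)) :=
  stmt_2_general p0 p1 p2 p3 h2 h3 hsum hsub D hD
end

section
/- Let lambda > 0 and 0 < p < 1/(lambda+1). Set beta = (1-p)/(lambda*p+1), alpha = (lambda+1)*p/(lambda*(lambda*p+1)), c = lambda/(lambda+1), and define p0 = beta, p1 = alpha*c, p2 = 1 - beta - alpha*c, f(y) = p0 + p1*y + p2*y^2. Then the integral over [0,1] of (1-y)/(f(y)-y) with respect to y equals (1 + 1/(lambda*p)) * log((1-p)/(1-p-lambda*p)). -/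
/-!
Since 1 is a fixed point of the offspring generating function `f`, the quadratic `f(y) - y`
factors as `p2 (1 - y) (r - y)` with `p2 = λp/(λp+1)` and second root `r = (1-p)/(λp)`, which
exceeds 1 exactly by subcriticality. The integrand therefore reduces to `1 / (p2 (r - y))`,
whose integral over `[0, 1]` is `p2⁻¹ log (r / (r - 1))`.
-/

open Real intervalIntegral

theorem integral_inv_const_sub_zero_one {r : ℝ} (hr : 1 < r) :
    ∫ y in (0:ℝ)..1, (r - y)⁻¹ = log (r / (r - 1)) := by
  rw [integral_comp_sub_left (fun x => x⁻¹) r, sub_zero,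
    integral_inv_of_pos (by linarith) (by linarith)]

theorem integral_one_sub_div_mul_one_sub_mul {q r : ℝ} (hr : 1 < r) :
    ∫ y in (0:ℝ)..1, (1 - y) / (q * (1 - y) * (r - y)) = q⁻¹ * log (r / (r - 1)) := by
  rw [← integral_inv_const_sub_zero_one hr, ← intervalIntegral.integral_const_mul]
  refine integral_congr_ae ?_
  filter_upwards [MeasureTheory.Measure.ae_ne MeasureTheory.volume 1] with y hy _
  rw [mul_comm q, mul_assoc, div_mul_cancel_left₀ (sub_ne_zero.2 hy.symm), mul_inv]

theorem stmt_4 (lam p : ℝ) (hlam : 0 < lam) (hp : 0 < p) (hp' : p < 1 / (lam + 1))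
    (β α c p0 p1 p2 : ℝ)
    (hβ : β = (1 - p) / (lam * p + 1))
    (hα : α = (lam + 1) * p / (lam * (lam * p + 1)))
    (hc : c = lam / (lam + 1))
    (hp0 : p0 = β) (hp1 : p1 = α * c) (hp2 : p2 = 1 - β - α * c) :
    ∫ y in (0:ℝ)..1, (1 - y) / ((p0 + p1 * y + p2 * y ^ 2) - y)
      = (1 + 1 / (lam * p)) * Real.log ((1 - p) / (1 - p - lam * p)) := by
  have hlp : 0 < lam * p := mul_pos hlam hp
  have hr : 1 < (1 - p) / (lam * p) := by
    rw [lt_div_iff₀ (by linarith)] at hp'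
    rw [lt_div_iff₀ hlp]
    linarith
  have hfactor : ∀ y, p0 + p1 * y + p2 * y ^ 2 - y
      = lam * p / (lam * p + 1) * (1 - y) * ((1 - p) / (lam * p) - y) := by
    intro y
    subst_vars
    field_simp
    ring
  simp_rw [hfactor]
  rw [integral_one_sub_div_mul_one_sub_mul hr]
  congr 2
  · field_simp
  · field_simp
end

section
/- Let lambda > 0 and 0 < p < (lambda+1)/(2*lambda^2+2*lambda+1). Set beta = (1-p)/(lambda*p+1), alpha = (lambda+1)*p/(lambda*(lambda*p+1)), c = lambda/(lambda+1), and define p0 = beta, p1 = alpha*c, p2 = alpha*c^2, p3 = 1 - beta - alpha*c - alpha*c^2, f(y) = p0 + p1*y + p2*y^2 + p3*y^3. Then the integral over [0,1] of (1-y)/(f(y)-y) with respect to y equals ((lambda*p+1)/(lambda*p)) * sqrt(p*(lambda+1)/(4+lambda*p-3*p)) * log( ((2-2*p-lambda*p)*sqrt(p*(lambda+1)) + lambda*p*sqrt(4+lambda*p-3*p)) / ((2-2*p-lambda*p)*sqrt(p*(lambda+1)) - lambda*p*sqrt(4+lambda*p-3*p)) ). -/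
/-!
Since `f 1 = 1`, `f y - y = (1 - y) Q(y) / ((λp + 1)(λ + 1))` with the concave quadratic
`Q(y) = (λ + 1)(1 - p) - λ(λ + 1)p y - λ²p y²`, so the integrand is a constant multiple of
`1 / Q`.
Subcriticality is exactly `Q(1) > 0`, so the roots of `Q` lie on either side of `[0, 1]`, and
partial fractions integrate `1 / Q` to a logarithm.
-/

open Real MeasureTheory

theorem integral_inv_sub_mul_sub {a b u v : ℝ} (hau : a < u) (huv : u ≤ v) (hvb : v < b) :
    ∫ y in u..v, ((b - y) * (y - a))⁻¹
      = (log ((v - a) / (b - v)) - log ((u - a) / (b - u))) / (b - a) := by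
  have hab : b - a ≠ 0 := by linarith
  have hderiv : ∀ y ∈ Set.uIcc u v,
      HasDerivAt (fun y => (log (y - a) - log (b - y)) / (b - a)) ((b - y) * (y - a))⁻¹ y := by
    intro y hy
    rw [Set.uIcc_of_le huv] at hy
    have hya : y - a ≠ 0 := by linarith [hy.1]
    have hby : b - y ≠ 0 := by linarith [hy.2]
    refine (((((hasDerivAt_id y).sub_const a).log hya).sub
      (((hasDerivAt_const y b).sub (hasDerivAt_id y)).log hby)).div_const (b - a)).congr_deriv ?_
    simp only [id, Pi.sub_apply]
    field_simp
    ring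
  have hcont : ContinuousOn (fun y => ((b - y) * (y - a))⁻¹) (Set.uIcc u v) := by
    refine ContinuousOn.inv₀ (by fun_prop) fun y hy => ?_
    rw [Set.uIcc_of_le huv] at hy
    exact mul_ne_zero (by linarith [hy.2]) (by linarith [hy.1])
  rw [intervalIntegral.integral_eq_sub_of_hasDerivAt hderiv hcont.intervalIntegrable,
    log_div (by linarith) (by linarith), log_div (by linarith) (by linarith)]
  ring

theorem integral_inv_quadratic {a b c s : ℝ} (ha : 0 < a) (hc : 0 < c) (habc : a + b < c)
    (hs : 0 ≤ s) (hs2 : s ^ 2 = b ^ 2 + 4 * a * c) :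
    ∫ y in (0:ℝ)..1, (c - b * y - a * y ^ 2)⁻¹
      = log ((2 * c - b + s) / (2 * c - b - s)) / s := by
  -- The concave quadratic is positive at `0` and `1`, so its roots `r' < r` straddle `[0, 1]`.
  have hsb : b < s := by nlinarith
  have hsb' : -b < s := by nlinarith
  have hsab : 2 * a + b < s := by nlinarith
  set r := (s - b) / (2 * a)
  set r' := -(s + b) / (2 * a)
  have hr : 1 < r := by rw [lt_div_iff₀ (by positivity)]; linarith
  have hr' : r' < 0 := div_neg_of_neg_of_pos (by linarith) (by positivity)
  have hfactor : ∀ y, c - b * y - a * y ^ 2 = a * ((r - y) * (y - r')) := by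
    intro y
    rw [div_sub' (by positivity), sub_div' (by positivity)]
    field_simp
    linear_combination -hs2
  have hrr : r - r' = s / a := by
    simp only [r, r']
    field_simp
    ring
  have hplus : 0 < 2 * c - b + s := by linarith
  have hminus : 0 < 2 * c - b - s := by
    have : 0 < (2 * c - b - s) * (2 * c - b + s) := by nlinarith
    exact pos_of_mul_pos_left this hplus.le
  have hratio : (1 - r') / (r - 1) / ((0 - r') / (r - 0)) = (2 * c - b + s) / (2 * c - b - s) := by
    rw [div_div_div_eq, div_eq_div_iff (mul_ne_zero (by linarith) (by linarith)) hminus.ne']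
    simp only [r, r']
    field_simp
    linear_combination (-2 * s) * hs2
  rw [intervalIntegral.integral_congr (g := fun y => a⁻¹ * ((r - y) * (y - r'))⁻¹)
      fun y _ => by simp only [hfactor, mul_inv],
    intervalIntegral.integral_const_mul, integral_inv_sub_mul_sub hr' zero_le_one hr,
    ← log_div (div_pos (by linarith) (by linarith)).ne' (div_pos (by linarith) (by linarith)).ne',
    hratio, hrr]
  field_simp

theorem pgf_sub_self_eq {lam p β α c : ℝ} (hlam : 0 < lam) (hp : 0 < p)
    (hβ : β = (1 - p) / (lam * p + 1)) (hα : α = (lam + 1) * p / (lam * (lam * p + 1)))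
    (hc : c = lam / (lam + 1)) (y : ℝ) :
    β + α * c * y + α * c ^ 2 * y ^ 2 + (1 - β - α * c - α * c ^ 2) * y ^ 3 - y
      = (1 - y) * ((lam + 1) * (1 - p) - lam * (lam + 1) * p * y - lam ^ 2 * p * y ^ 2)
        / ((lam * p + 1) * (lam + 1)) := by
  subst hβ hα hc
  field_simp
  ring

theorem integral_inv_catastrophe_quadratic {lam p : ℝ} (hlam : 0 < lam) (hp : 0 < p)
    (hsubcritical : p * (2 * lam ^ 2 + 2 * lam + 1) < lam + 1) :
    ∫ y in (0:ℝ)..1, ((lam + 1) * (1 - p) - lam * (lam + 1) * p * y - lam ^ 2 * p * y ^ 2)⁻¹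
      = √(p * (lam + 1) / (4 + lam * p - 3 * p)) *
          log (((2 - 2 * p - lam * p) * √(p * (lam + 1)) + lam * p * √(4 + lam * p - 3 * p))
            / ((2 - 2 * p - lam * p) * √(p * (lam + 1)) - lam * p * √(4 + lam * p - 3 * p)))
        / (lam * p * (lam + 1)) := by
  have h4 : 0 < 4 + lam * p - 3 * p := by nlinarith
  set s1 := √(p * (lam + 1))
  set s2 := √(4 + lam * p - 3 * p)
  have hs1sq : s1 ^ 2 = p * (lam + 1) := sq_sqrt (by positivity)
  have hs2sq : s2 ^ 2 = 4 + lam * p - 3 * p := sq_sqrt h4.le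
  have hs1 : 0 < s1 := sqrt_pos.mpr (by positivity)
  have hs2 : 0 < s2 := sqrt_pos.mpr h4
  have hratio :
      ((2 - 2 * p - lam * p) * s1 + lam * p * s2) / ((2 - 2 * p - lam * p) * s1 - lam * p * s2)
      = (2 * ((lam + 1) * (1 - p)) - lam * (lam + 1) * p + lam * (s1 * s2))
        / (2 * ((lam + 1) * (1 - p)) - lam * (lam + 1) * p - lam * (s1 * s2)) := by
    conv_lhs => rw [← mul_div_mul_left _ _ (by positivity : lam + 1 ≠ 0)]
    conv_rhs => rw [← mul_div_mul_left _ _ hs1.ne']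
    congr 1
    · linear_combination -lam * s2 * hs1sq
    · linear_combination lam * s2 * hs1sq
  have hdisc : (lam * (s1 * s2)) ^ 2
      = (lam * (lam + 1) * p) ^ 2 + 4 * (lam ^ 2 * p) * ((lam + 1) * (1 - p)) := by
    linear_combination lam ^ 2 * s2 ^ 2 * hs1sq + lam ^ 2 * p * (lam + 1) * hs2sq
  have hsqrt : √(p * (lam + 1) / (4 + lam * p - 3 * p)) = s1 / s2 := sqrt_div (by positivity) _
  rw [integral_inv_quadratic (by positivity) (by nlinarith) (by nlinarith) (by positivity) hdisc,
    hsqrt, hratio]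
  generalize log _ = L
  field_simp
  linear_combination -L * hs1sq

theorem stmt_5 (lam p : ℝ) (hlam : 0 < lam) (hp : 0 < p)
    (hp' : p < (lam + 1) / (2 * lam ^ 2 + 2 * lam + 1))
    (β α c p0 p1 p2 p3 : ℝ)
    (hβ : β = (1 - p) / (lam * p + 1))
    (hα : α = (lam + 1) * p / (lam * (lam * p + 1)))
    (hc : c = lam / (lam + 1))
    (hp0 : p0 = β) (hp1 : p1 = α * c) (hp2 : p2 = α * c ^ 2)
    (hp3 : p3 = 1 - β - α * c - α * c ^ 2) :
    ∫ y in (0:ℝ)..1, (1 - y) / ((p0 + p1 * y + p2 * y ^ 2 + p3 * y ^ 3) - y)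
      = ((lam * p + 1) / (lam * p)) * Real.sqrt (p * (lam + 1) / (4 + lam * p - 3 * p)) *
        Real.log
          (((2 - 2 * p - lam * p) * Real.sqrt (p * (lam + 1))
              + lam * p * Real.sqrt (4 + lam * p - 3 * p)) /
            ((2 - 2 * p - lam * p) * Real.sqrt (p * (lam + 1))
              - lam * p * Real.sqrt (4 + lam * p - 3 * p))) := by
  subst p0 p1 p2 p3
  have hintegrand : ∀ᵐ y, y ∈ Set.uIoc (0:ℝ) 1 →
      (1 - y) / (β + α * c * y + α * c ^ 2 * y ^ 2 + (1 - β - α * c - α * c ^ 2) * y ^ 3 - y)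
        = (lam * p + 1) * (lam + 1) *
          ((lam + 1) * (1 - p) - lam * (lam + 1) * p * y - lam ^ 2 * p * y ^ 2)⁻¹ := by
    filter_upwards [show ∀ᵐ y : ℝ, y ≠ 1 by simp [ae_iff, measure_singleton]] with y hy _
    rw [pgf_sub_self_eq hlam hp hβ hα hc, div_div_eq_mul_div,
      mul_div_mul_left _ _ (sub_ne_zero.mpr hy.symm), div_eq_mul_inv]
  rw [intervalIntegral.integral_congr_ae hintegrand, intervalIntegral.integral_const_mul,
    integral_inv_catastrophe_quadratic hlam hp ((lt_div_iff₀ (by positivity)).mp hp')]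
  field_simp
end

section
/- Let lambda > 0 and 0 < p < (lambda+2)/(lambda^2+2*lambda+2). Set beta = (1-p)/(lambda*p+1), alpha = (lambda+1)*p/(lambda*(lambda*p+1)), c = lambda/(lambda+1), and define p0 = beta, p1 = 2*alpha*c/(2-c), p2 = 1 - beta - 2*alpha*c/(2-c), f(y) = p0 + p1*y + p2*y^2. Then the integral over [0,1] of (1-y)/(f(y)-y) with respect to y equals ((lambda+2)*(lambda*p+1)/(lambda*p*(lambda+1))) * log( (1-p)*(lambda+2) / (lambda+2 - p*(lambda^2+2*lambda+2)) ). -/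
/-!
Since `f(1) = p0 + p1 + p2 = 1`, the polynomial `f(y) - y` has the root `1` and factors as
`(1 - y) (p0 - p2 y)`, so the integrand is `(p0 - p2 y)⁻¹` and the integral is
`p2⁻¹ log (p0 / (p0 - p2))`. For the given parameters `p2 = λp(λ+1) / ((λp+1)(λ+2))` and
`p0 - p2 = (λ + 2 - p(λ² + 2λ + 2)) / ((λp+1)(λ+2))`, which is positive exactly by subcriticality.
-/

open Real Set Interval

theorem integral_inv_sub_left {r a b : ℝ} (hr : r ∉ [[a, b]]) :
    ∫ y in a..b, (r - y)⁻¹ = log ((r - a) / (r - b)) := by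
  rw [intervalIntegral.integral_comp_sub_left (fun x => x⁻¹) r, integral_inv]
  rw [mem_uIcc] at hr ⊢
  rintro (⟨h1, h2⟩ | ⟨h1, h2⟩)
  · exact hr (Or.inl ⟨by linarith, by linarith⟩)
  · exact hr (Or.inr ⟨by linarith, by linarith⟩)

theorem integral_one_sub_div_quadratic_sub_self {a b c : ℝ} (hsum : a + b + c = 1)
    (hc : 0 < c) (hca : c < a) :
    ∫ y in (0:ℝ)..1, (1 - y) / ((a + b * y + c * y ^ 2) - y) = c⁻¹ * log (a / (a - c)) := by
  have hfactor (y : ℝ) : (a + b * y + c * y ^ 2) - y = (1 - y) * (c * (a / c - y)) := by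
    rw [show b = 1 - a - c by linarith]
    field_simp
    ring
  have hcongr : ∫ y in (0:ℝ)..1, (1 - y) / ((a + b * y + c * y ^ 2) - y)
      = ∫ y in (0:ℝ)..1, c⁻¹ * (a / c - y)⁻¹ := by
    apply intervalIntegral.integral_congr_ae
    have hne : ∀ᵐ y : ℝ, y ≠ 1 := MeasureTheory.ae_iff.mpr (by simp)
    filter_upwards [hne] with y hy _
    rw [hfactor y, div_mul_cancel_left₀ (sub_ne_zero.mpr hy.symm), mul_inv]
  have hr : 1 < a / c := (one_lt_div hc).mpr hca
  have hlog : (a / c - 0) / (a / c - 1) = a / (a - c) := by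
    rw [sub_zero, div_sub_one hc.ne', div_div_div_cancel_right₀ hc.ne']
  rw [hcongr, intervalIntegral.integral_const_mul,
    integral_inv_sub_left (notMem_uIcc_of_gt (by linarith) hr), hlog]

theorem stmt_6 (lam p : ℝ) (hlam : 0 < lam) (hp : 0 < p)
    (hp' : p < (lam + 2) / (lam ^ 2 + 2 * lam + 2))
    (β α c p0 p1 p2 : ℝ)
    (hβ : β = (1 - p) / (lam * p + 1))
    (hα : α = (lam + 1) * p / (lam * (lam * p + 1)))
    (hc : c = lam / (lam + 1))
    (hp0 : p0 = β) (hp1 : p1 = 2 * α * c / (2 - c)) (hp2 : p2 = 1 - β - 2 * α * c / (2 - c)) :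
    ∫ y in (0:ℝ)..1, (1 - y) / ((p0 + p1 * y + p2 * y ^ 2) - y)
      = ((lam + 2) * (lam * p + 1) / (lam * p * (lam + 1))) *
        Real.log ((1 - p) * (lam + 2) / (lam + 2 - p * (lam ^ 2 + 2 * lam + 2))) := by
  have hD : 0 < lam + 2 - p * (lam ^ 2 + 2 * lam + 2) := by
    have := (lt_div_iff₀ (by positivity)).mp hp'
    linarith
  have hp2_eq : p2 = lam * p * (lam + 1) / ((lam * p + 1) * (lam + 2)) := by
    have h2c : 2 - lam / (lam + 1) = (lam + 2) / (lam + 1) := by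
      field_simp
      ring
    rw [hp2, hβ, hα, hc, h2c]
    field_simp
    ring
  have hp0_sub :
      p0 - p2 = (lam + 2 - p * (lam ^ 2 + 2 * lam + 2)) / ((lam * p + 1) * (lam + 2)) := by
    rw [hp0, hβ, hp2_eq]
    field_simp
    ring
  have hp2_pos : 0 < p2 := by rw [hp2_eq]; positivity
  have hp2_lt : p2 < p0 := by
    rw [← sub_pos, hp0_sub]; positivity
  rw [integral_one_sub_div_quadratic_sub_self (by rw [hp0, hp1, hp2]; ring) hp2_pos hp2_lt,
    hp0_sub, hp2_eq, hp0, hβ]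
  congr 2
  · rw [inv_div, mul_comm]
  · field_simp
end

section
/- Let lambda > 0 and 0 < p < (lambda+3)/(2*lambda^2+3*lambda+3). Set beta = (1-p)/(lambda*p+1), alpha = (lambda+1)*p/(lambda*(lambda*p+1)), c = lambda/(lambda+1), and define p0 = beta, p1 = 3*alpha*c/(3-c), p2 = 6*alpha*c^2/((3-2*c)*(3-c)), p3 = 1 - p0 - p1 - p2, f(y) = p0 + p1*y + p2*y^2 + p3*y^3. Let g = (lambda+3)*(2*lambda+3-3*lambda*p-3*p-lambda^2*p) and h = lambda*sqrt(p*(lambda+1)*(p*lambda^2+4*lambda+6-3*p)*(lambda+3)). Then the integral over [0,1] of (1-y)/(f(y)-y) with respect to y equals ((lambda*p+1)*(2*lambda+3)*(lambda+3)/(2*h)) * log((g+h)/(g-h)). -/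
/-!
Dividing out the fixed point `y = 1` of the offspring generating function leaves a quadratic,
`f y - y = (1 - y) Q(y) / D`, so the integrand is `D / Q`. The leading coefficient of `Q` is
negative and `Q(0), Q(1) > 0` (the latter being subcriticality), hence `Q > 0` on `[0, 1]`.
The discriminant of `Q` is `(2h)²`, so `1 / Q` has the logarithmic antiderivative obtained from
the factorisation `(2ay + b - 2h)(2ay + b + 2h) = 4aQ(y)`, and evaluating it at `0` and `1`
gives `log ((g + h) / (g - h)) / (2h)`.
-/

open Set Real MeasureTheory

lemma quadratic_pos_of_concave {a b c x : ℝ} (ha : a ≤ 0) (h₀ : 0 < c) (h₁ : 0 < a + b + c)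
    (hx : x ∈ Icc (0 : ℝ) 1) : 0 < a * x ^ 2 + b * x + c := by
  obtain ⟨hx₀, hx₁⟩ := hx
  have hchord : 0 < (1 - x) * c + x * (a + b + c) := by
    rcases hx₀.eq_or_lt with rfl | hx₀
    · simpa using h₀
    · nlinarith
  nlinarith [mul_nonneg (mul_nonneg hx₀ (sub_nonneg.mpr hx₁)) (neg_nonneg.mpr ha)]

lemma mul_eq_four_mul_quadratic {a b c s : ℝ} (hdisc : b ^ 2 - 4 * a * c = s ^ 2) (x : ℝ) :
    (2 * a * x + b - s) * (2 * a * x + b + s) = 4 * a * (a * x ^ 2 + b * x + c) := by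
  linear_combination hdisc

lemma linear_factors_ne_zero_of_quadratic_ne_zero {a b c s x : ℝ} (ha : a ≠ 0)
    (hdisc : b ^ 2 - 4 * a * c = s ^ 2) (hx : a * x ^ 2 + b * x + c ≠ 0) :
    2 * a * x + b - s ≠ 0 ∧ 2 * a * x + b + s ≠ 0 := by
  have h := mul_eq_four_mul_quadratic hdisc x ▸ mul_ne_zero (mul_ne_zero four_ne_zero ha) hx
  exact ⟨left_ne_zero_of_mul h, right_ne_zero_of_mul h⟩

lemma hasDerivAt_log_sub_log_quadratic {a b c s x : ℝ} (ha : a ≠ 0) (hs : s ≠ 0)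
    (hdisc : b ^ 2 - 4 * a * c = s ^ 2) (hx : a * x ^ 2 + b * x + c ≠ 0) :
    HasDerivAt (fun x ↦ (log (2 * a * x + b - s) - log (2 * a * x + b + s)) / s)
      (1 / (a * x ^ 2 + b * x + c)) x := by
  obtain ⟨hm, hp⟩ := linear_factors_ne_zero_of_quadratic_ne_zero ha hdisc hx
  have hu : HasDerivAt (fun x ↦ 2 * a * x + b) (2 * a) x := by
    simpa using ((hasDerivAt_id x).const_mul (2 * a)).add_const b
  refine ((((hu.sub_const s).log hm).sub ((hu.add_const s).log hp)).div_const s).congr_deriv ?_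
  rw [div_sub_div _ _ hm hp, mul_eq_four_mul_quadratic hdisc]
  field_simp
  ring

theorem integral_one_div_quadratic_s7 {a b c s x₀ x₁ : ℝ} (ha : a ≠ 0) (hs : s ≠ 0)
    (hdisc : b ^ 2 - 4 * a * c = s ^ 2) (hQ : ∀ x ∈ uIcc x₀ x₁, a * x ^ 2 + b * x + c ≠ 0) :
    ∫ x in x₀..x₁, 1 / (a * x ^ 2 + b * x + c) =
      log ((2 * a * x₁ + b - s) * (2 * a * x₀ + b + s) /
        ((2 * a * x₁ + b + s) * (2 * a * x₀ + b - s))) / s := by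
  rw [intervalIntegral.integral_eq_sub_of_hasDerivAt
    (fun x hx ↦ hasDerivAt_log_sub_log_quadratic ha hs hdisc (hQ x hx))
    ((continuousOn_const.div (by fun_prop) hQ).intervalIntegrable)]
  obtain ⟨h₁m, h₁p⟩ :=
    linear_factors_ne_zero_of_quadratic_ne_zero ha hdisc (hQ x₁ right_mem_uIcc)
  obtain ⟨h₀m, h₀p⟩ :=
    linear_factors_ne_zero_of_quadratic_ne_zero ha hdisc (hQ x₀ left_mem_uIcc)
  rw [log_div (mul_ne_zero h₁m h₀p) (mul_ne_zero h₁p h₀m), log_mul h₁m h₀p, log_mul h₁p h₀m]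
  ring

lemma offspring_pgf_sub_self {lam p β α c p0 p1 p2 p3 : ℝ} (hlam : 0 < lam) (hp : 0 ≤ p)
    (hβ : β = (1 - p) / (lam * p + 1))
    (hα : α = (lam + 1) * p / (lam * (lam * p + 1)))
    (hc : c = lam / (lam + 1))
    (hp0 : p0 = β) (hp1 : p1 = 3 * α * c / (3 - c))
    (hp2 : p2 = 6 * α * c ^ 2 / ((3 - 2 * c) * (3 - c)))
    (hp3 : p3 = 1 - p0 - p1 - p2) (y : ℝ) :
    p0 + p1 * y + p2 * y ^ 2 + p3 * y ^ 3 - y =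
      (1 - y) * (-(2 * p * lam ^ 2 * (lam + 1)) * y ^ 2
        + -(2 * p * lam * (lam + 1) * (lam + 3)) * y + (1 - p) * (2 * lam + 3) * (lam + 3)) /
        ((lam * p + 1) * (2 * lam + 3) * (lam + 3)) := by
  have h3c : 3 - c = (2 * lam + 3) / (lam + 1) := by rw [hc]; field_simp; ring
  have h32c : 3 - 2 * c = (lam + 3) / (lam + 1) := by rw [hc]; field_simp; ring
  subst hp3 hp0 hp1 hp2
  rw [h32c, h3c, hα, hβ, hc]
  field_simp
  ring

lemma offspring_quadratic_pos {lam p y : ℝ} (hlam : 0 < lam) (hp : 0 ≤ p)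
    (hsub : p * (2 * lam ^ 2 + 3 * lam + 3) < lam + 3) (hy : y ∈ Icc (0 : ℝ) 1) :
    0 < -(2 * p * lam ^ 2 * (lam + 1)) * y ^ 2 + -(2 * p * lam * (lam + 1) * (lam + 3)) * y
      + (1 - p) * (2 * lam + 3) * (lam + 3) := by
  have hp_lt_one : p < 1 := by nlinarith
  refine quadratic_pos_of_concave (neg_nonpos.mpr (by positivity)) ?_ ?_ hy
  · exact mul_pos (mul_pos (by linarith) (by positivity)) (by positivity)
  · calc 0 < (2 * lam + 3) * (lam + 3 - p * (2 * lam ^ 2 + 3 * lam + 3)) :=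
          mul_pos (by positivity) (by linarith)
      _ = _ := by ring

theorem stmt_7 (lam p : ℝ) (hlam : 0 < lam) (hp : 0 < p)
    (hp' : p < (lam + 3) / (2 * lam ^ 2 + 3 * lam + 3))
    (β α c p0 p1 p2 p3 g h : ℝ)
    (hβ : β = (1 - p) / (lam * p + 1))
    (hα : α = (lam + 1) * p / (lam * (lam * p + 1)))
    (hc : c = lam / (lam + 1))
    (hp0 : p0 = β) (hp1 : p1 = 3 * α * c / (3 - c))
    (hp2 : p2 = 6 * α * c ^ 2 / ((3 - 2 * c) * (3 - c)))
    (hp3 : p3 = 1 - p0 - p1 - p2)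
    (hg : g = (lam + 3) * (2 * lam + 3 - 3 * lam * p - 3 * p - lam ^ 2 * p))
    (hh : h = lam * Real.sqrt (p * (lam + 1) * (p * lam ^ 2 + 4 * lam + 6 - 3 * p) * (lam + 3))) :
    ∫ y in (0:ℝ)..1, (1 - y) / ((p0 + p1 * y + p2 * y ^ 2 + p3 * y ^ 3) - y)
      = ((lam * p + 1) * (2 * lam + 3) * (lam + 3) / (2 * h)) *
        Real.log ((g + h) / (g - h)) := by
  set a := -(2 * p * lam ^ 2 * (lam + 1))
  set b := -(2 * p * lam * (lam + 1) * (lam + 3))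
  set C := (1 - p) * (2 * lam + 3) * (lam + 3)
  set D := (lam * p + 1) * (2 * lam + 3) * (lam + 3)
  have hsub : p * (2 * lam ^ 2 + 3 * lam + 3) < lam + 3 := (lt_div_iff₀ (by positivity)).mp hp'
  have hp_lt_one : p < 1 := by nlinarith
  have hint : ∫ y in (0:ℝ)..1, (1 - y) / ((p0 + p1 * y + p2 * y ^ 2 + p3 * y ^ 3) - y) =
      ∫ y in (0:ℝ)..1, D * (1 / (a * y ^ 2 + b * y + C)) := by
    -- at `y = 1` the left integrand is `0 / 0 = 0`, so the integrands only agree off `{1}`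
    refine intervalIntegral.integral_congr_ae ?_
    filter_upwards [compl_mem_ae_iff.mpr (measure_singleton (1 : ℝ))] with y hy _
    rw [offspring_pgf_sub_self hlam hp.le hβ hα hc hp0 hp1 hp2 hp3, div_div_eq_mul_div,
      mul_div_mul_left _ _ (sub_ne_zero.mpr (Ne.symm hy)), mul_one_div]
  have harg : 0 < p * (lam + 1) * (p * lam ^ 2 + 4 * lam + 6 - 3 * p) * (lam + 3) :=
    mul_pos (mul_pos (mul_pos hp (by linarith)) (by nlinarith)) (by linarith)
  have hH :
      h ^ 2 = lam ^ 2 * (p * (lam + 1) * (p * lam ^ 2 + 4 * lam + 6 - 3 * p) * (lam + 3)) := by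
    rw [hh, mul_pow, sq_sqrt harg.le]
  have hh₀ : 0 < h := hh ▸ mul_pos hlam (sqrt_pos.mpr harg)
  have hM : -(8 * p * lam ^ 2 * (lam + 1)) ≠ 0 := neg_ne_zero.mpr (by positivity)
  have hR : (2 * a * 1 + b - 2 * h) * (2 * a * 0 + b + 2 * h) /
      ((2 * a * 1 + b + 2 * h) * (2 * a * 0 + b - 2 * h)) = (g + h) / (g - h) := by
    rw [← mul_div_mul_left (g + h) (g - h) hM]
    congr 1
    · rw [hg]; linear_combination -4 * hH
    · rw [hg]; linear_combination -4 * hH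
  rw [hint, intervalIntegral.integral_const_mul, integral_one_div_quadratic_s7 (s := 2 * h), hR]
  · ring
  · exact neg_ne_zero.mpr (by positivity)
  · positivity
  · linear_combination -4 * hH
  · rw [uIcc_of_le zero_le_one]
    exact fun y hy ↦ (offspring_quadratic_pos hlam hp.le hsub hy).ne'
end

section
/- Let lambda > 0 and 0 < p < 1. Set beta = (1-p)/(lambda*p+1), alpha = (lambda+1)*p/(lambda*(lambda*p+1)), c = lambda/(lambda+1), p1 = alpha*c, p2 = alpha*c^2, and p3 = 1 - beta - alpha*c - alpha*c^2. Then p1 + 2*p2 + 3*p3 < 1 if and only if p < (lambda+1)/(2*lambda^2+2*lambda+1), and p1 + 2*p2 + 3*p3 = 1 if and only if p = (lambda+1)/(2*lambda^2+2*lambda+1). -/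
lemma lt_one_iff_and_eq_one_iff_of_sub_one_eq_div {x p q r d : ℝ} (hq : 0 < q) (hd : 0 < d)
    (h : x - 1 = (q * p - r) / d) : (x < 1 ↔ p < r / q) ∧ (x = 1 ↔ p = r / q) := by
  constructor
  · calc x < 1 ↔ (q * p - r) / d < 0 := by rw [← h, sub_neg]
      _ ↔ q * p < r := by rw [div_lt_iff₀ hd, zero_mul, sub_neg]
      _ ↔ p < r / q := (lt_div_iff₀' hq).symm
  · calc x = 1 ↔ (q * p - r) / d = 0 := by rw [← h, sub_eq_zero]
      _ ↔ p * q = r := by rw [div_eq_zero_iff, or_iff_left hd.ne', sub_eq_zero, mul_comm]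
      _ ↔ p = r / q := (eq_div_iff hq.ne').symm

/-- The left side is `f'(1) - 1` for the offspring law `β, α c, α c², 1 - β - α c - α c²`. -/
lemma mean_offspring_sub_one {lam p β α c : ℝ} (hlam : lam ≠ 0) (hlam₁ : lam + 1 ≠ 0)
    (hD : lam * p + 1 ≠ 0)
    (hβ : β = (1 - p) / (lam * p + 1))
    (hα : α = (lam + 1) * p / (lam * (lam * p + 1)))
    (hc : c = lam / (lam + 1)) :
    α * c + 2 * (α * c ^ 2) + 3 * (1 - β - α * c - α * c ^ 2) - 1 =
      ((2 * lam ^ 2 + 2 * lam + 1) * p - (lam + 1)) / ((lam + 1) * (lam * p + 1)) := by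
  subst hβ hα hc
  field_simp
  ring

theorem stmt_15_general (lam p : ℝ) (hlam : 0 < lam) (hp : 0 < p)
    (β α c p1 p2 p3 : ℝ)
    (hβ : β = (1 - p) / (lam * p + 1))
    (hα : α = (lam + 1) * p / (lam * (lam * p + 1)))
    (hc : c = lam / (lam + 1))
    (hp1 : p1 = α * c) (hp2 : p2 = α * c ^ 2) (hp3 : p3 = 1 - β - α * c - α * c ^ 2) :
    (p1 + 2 * p2 + 3 * p3 < 1 ↔ p < (lam + 1) / (2 * lam ^ 2 + 2 * lam + 1)) ∧
    (p1 + 2 * p2 + 3 * p3 = 1 ↔ p = (lam + 1) / (2 * lam ^ 2 + 2 * lam + 1)) := by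
  subst hp1 hp2 hp3
  have hD : 0 < lam * p + 1 := by positivity
  exact lt_one_iff_and_eq_one_iff_of_sub_one_eq_div (by positivity) (by positivity)
    (mean_offspring_sub_one hlam.ne' (by positivity) hD.ne' hβ hα hc)

theorem stmt_15 (lam p : ℝ) (hlam : 0 < lam) (hp : 0 < p) (hp' : p < 1)
    (β α c p1 p2 p3 : ℝ)
    (hβ : β = (1 - p) / (lam * p + 1))
    (hα : α = (lam + 1) * p / (lam * (lam * p + 1)))
    (hc : c = lam / (lam + 1))
    (hp1 : p1 = α * c) (hp2 : p2 = α * c ^ 2) (hp3 : p3 = 1 - β - α * c - α * c ^ 2) :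
    (p1 + 2 * p2 + 3 * p3 < 1 ↔ p < (lam + 1) / (2 * lam ^ 2 + 2 * lam + 1)) ∧
    (p1 + 2 * p2 + 3 * p3 = 1 ↔ p = (lam + 1) / (2 * lam ^ 2 + 2 * lam + 1)) :=
  stmt_15_general lam p hlam hp β α c p1 p2 p3 hβ hα hc hp1 hp2 hp3
end

section
/- Let lambda > 0 and 0 < p < 1. Set beta = (1-p)/(lambda*p+1), alpha = (lambda+1)*p/(lambda*(lambda*p+1)), c = lambda/(lambda+1), p1 = 3*alpha*c/(3-c), p2 = 6*alpha*c^2/((3-2*c)*(3-c)), and p3 = 1 - beta - p1 - p2. Then p1 + 2*p2 + 3*p3 < 1 if and only if p < (lambda+3)/(2*lambda^2+3*lambda+3), and p1 + 2*p2 + 3*p3 = 1 if and only if p = (lambda+3)/(2*lambda^2+3*lambda+3). -/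
/-! Clearing denominators, `f'(1) - 1` is `(p (2λ² + 3λ + 3) - (λ + 3)) / ((λp + 1)(λ + 3))`, a
quotient whose denominator is positive, so its sign and vanishing are those of the numerator,
which is affine and increasing in `p`. -/

theorem mean_offspring_sub_one_eq {lam p β α c p1 p2 p3 : ℝ} (hlam : 0 < lam) (hp : 0 ≤ p)
    (hβ : β = (1 - p) / (lam * p + 1))
    (hα : α = (lam + 1) * p / (lam * (lam * p + 1)))
    (hc : c = lam / (lam + 1))
    (hp1 : p1 = 3 * α * c / (3 - c))
    (hp2 : p2 = 6 * α * c ^ 2 / ((3 - 2 * c) * (3 - c)))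
    (hp3 : p3 = 1 - β - p1 - p2) :
    p1 + 2 * p2 + 3 * p3 - 1 =
      (p * (2 * lam ^ 2 + 3 * lam + 3) - (lam + 3)) / ((lam * p + 1) * (lam + 3)) := by
  have hlamp : 0 < lam * p + 1 := by positivity
  have h3c : 3 - c = (2 * lam + 3) / (lam + 1) := by rw [hc]; field_simp; ring
  have h32c : 3 - 2 * c = (lam + 3) / (lam + 1) := by rw [hc]; field_simp; ring
  subst hp3 hp2 hp1 hβ hα
  rw [h32c, h3c, hc]
  field_simp
  ring

theorem stmt_17_general (lam p : ℝ) (hlam : 0 < lam) (hp : 0 < p)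
    (β α c p1 p2 p3 : ℝ)
    (hβ : β = (1 - p) / (lam * p + 1))
    (hα : α = (lam + 1) * p / (lam * (lam * p + 1)))
    (hc : c = lam / (lam + 1))
    (hp1 : p1 = 3 * α * c / (3 - c))
    (hp2 : p2 = 6 * α * c ^ 2 / ((3 - 2 * c) * (3 - c)))
    (hp3 : p3 = 1 - β - p1 - p2) :
    (p1 + 2 * p2 + 3 * p3 < 1 ↔ p < (lam + 3) / (2 * lam ^ 2 + 3 * lam + 3)) ∧
    (p1 + 2 * p2 + 3 * p3 = 1 ↔ p = (lam + 3) / (2 * lam ^ 2 + 3 * lam + 3)) := by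
  have hK : 0 < 2 * lam ^ 2 + 3 * lam + 3 := by positivity
  have hD : 0 < (lam * p + 1) * (lam + 3) := by positivity
  have key := mean_offspring_sub_one_eq hlam hp.le hβ hα hc hp1 hp2 hp3
  constructor
  · rw [← sub_neg, key, div_lt_iff₀ hD, zero_mul, sub_neg, lt_div_iff₀ hK]
  · rw [← sub_eq_zero, key, div_eq_zero_iff, or_iff_left hD.ne', sub_eq_zero, eq_div_iff hK.ne']

theorem stmt_17 (lam p : ℝ) (hlam : 0 < lam) (hp : 0 < p) (hp' : p < 1)
    (β α c p1 p2 p3 : ℝ)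
    (hβ : β = (1 - p) / (lam * p + 1))
    (hα : α = (lam + 1) * p / (lam * (lam * p + 1)))
    (hc : c = lam / (lam + 1))
    (hp1 : p1 = 3 * α * c / (3 - c))
    (hp2 : p2 = 6 * α * c ^ 2 / ((3 - 2 * c) * (3 - c)))
    (hp3 : p3 = 1 - β - p1 - p2) :
    (p1 + 2 * p2 + 3 * p3 < 1 ↔ p < (lam + 3) / (2 * lam ^ 2 + 3 * lam + 3)) ∧
    (p1 + 2 * p2 + 3 * p3 = 1 ↔ p = (lam + 3) / (2 * lam ^ 2 + 3 * lam + 3)) :=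
  stmt_17_general lam p hlam hp β α c p1 p2 p3 hβ hα hc hp1 hp2 hp3
end

section
/- Let lambda > 0 and 0 < p < (lambda+1)/(2*lambda^2+2*lambda+1). Let g = (lambda+3)*(2*lambda+3-3*lambda*p-3*p-lambda^2*p) and h = lambda*sqrt(p*(lambda+1)*(p*lambda^2+4*lambda+6-3*p)*(lambda+3)). Then ((lambda*p+1)*(2*lambda+3)*(lambda+3)/(2*h)) * log((g+h)/(g-h)) <= ((lambda*p+1)/(lambda*p)) * sqrt(p*(lambda+1)/(4+lambda*p-3*p)) * log( ((2-2*p-lambda*p)*sqrt(p*(lambda+1)) + lambda*p*sqrt(4+lambda*p-3*p)) / ((2-2*p-lambda*p)*sqrt(p*(lambda+1)) - lambda*p*sqrt(4+lambda*p-3*p)) ). -/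
open Real

/-!
Write `φ t = log ((1 + t) / (1 - t)) / t = 2 ∑ t ^ (2k) / (2k + 1)`, which is increasing on
`(0, 1)`. Since `(r / s) log ((r + s) / (r - s)) = φ (s / r)`, the left side is `K₁ φ (h / g)` and
the right side is `K₂ φ (v / u)` with `u = (2 - 2p - λp) √(p(λ + 1))` and `v = λp √(4 + λp - 3p)`.
The prefactors satisfy `K₁ ≤ K₂` because `2 (2λ + 3 - 3λp - 3p - λ²p) = (2λ + 3)(2 - 2p - λp) + λp`,
and `0 < h / g ≤ v / u < 1` reduces, after squaring, to polynomial inequalities. Written in `λ` and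
the slack `c = λ + 1 - p (2λ² + 2λ + 1) > 0`, each of them, multiplied by a power of `2λ² + 2λ + 1`,
becomes a polynomial with nonnegative coefficients.
-/

lemma log_one_add_div_one_sub_div_monotoneOn :
    MonotoneOn (fun x : ℝ => log ((1 + x) / (1 - x)) / x) (Set.Ioo 0 1) := by
  have hseries : ∀ x ∈ Set.Ioo (0 : ℝ) 1,
      HasSum (fun k : ℕ => 2 * (1 / (2 * k + 1)) * x ^ (2 * k)) (log ((1 + x) / (1 - x)) / x) := by
    rintro x ⟨hx0, hx1⟩
    have hterm : ∀ k : ℕ, 2 * (1 / (2 * k + 1)) * x ^ (2 * k + 1) / x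
        = 2 * (1 / (2 * k + 1)) * x ^ (2 * k) := fun k => by field_simp; ring
    rw [log_div (by linarith) (by linarith)]
    simpa only [hterm] using
      (hasSum_log_sub_log_of_abs_lt_one (abs_lt.2 ⟨by linarith, hx1⟩)).div_const x
  intro a ha b hb hab
  exact hasSum_le (fun k => by have := ha.1.le; gcongr) (hseries a ha) (hseries b hb)

lemma div_mul_log_add_div_sub (r s : ℝ) (hr : r ≠ 0) :
    r / s * log ((r + s) / (r - s)) = log ((1 + s / r) / (1 - s / r)) / (s / r) := by
  rw [one_add_div hr, one_sub_div hr, div_div_div_cancel_right₀ hr, div_div_eq_mul_div]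
  ring

section Threshold

variable {lam p : ℝ}

lemma two_sub_two_mul_sub_mul_pos (hlam : 0 < lam)
    (hc : 0 < lam + 1 - p * (2 * lam ^ 2 + 2 * lam + 1)) : 0 < 2 - 2 * p - lam * p := by
  have hd : 0 < 2 * lam ^ 2 + 2 * lam + 1 := by positivity
  generalize hcdef : lam + 1 - p * (2 * lam ^ 2 + 2 * lam + 1) = c at hc
  have key : (2 - 2 * p - lam * p) * (2 * lam ^ 2 + 2 * lam + 1)
      = lam * (3 * lam + 1) + c * (lam + 2) := by rw [← hcdef]; ring
  rw [← mul_pos_iff_of_pos_right hd, key]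
  positivity

lemma optimal_ratio_sq_lt_one (hlam : 0 < lam)
    (hc : 0 < lam + 1 - p * (2 * lam ^ 2 + 2 * lam + 1)) :
    lam ^ 2 * p * (4 + lam * p - 3 * p) < (lam + 1) * (2 - 2 * p - lam * p) ^ 2 := by
  have hd : 0 < 2 * lam ^ 2 + 2 * lam + 1 := by positivity
  generalize hcdef : lam + 1 - p * (2 * lam ^ 2 + 2 * lam + 1) = c at hc
  have key : ((lam + 1) * (2 - 2 * p - lam * p) ^ 2 - lam ^ 2 * p * (4 + lam * p - 3 * p))
        * (2 * lam ^ 2 + 2 * lam + 1) ^ 2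
      = c * (4 * lam + 16 * lam ^ 2 + 24 * lam ^ 3 + 16 * lam ^ 4)
        + c ^ 2 * (4 + 8 * lam + 8 * lam ^ 2) := by rw [← hcdef]; ring
  rw [← sub_pos, ← mul_pos_iff_of_pos_right (pow_pos hd 2), key]
  positivity

lemma independent_ratio_sq_le_optimal_ratio_sq (hlam : 0 < lam)
    (hc : 0 < lam + 1 - p * (2 * lam ^ 2 + 2 * lam + 1)) :
    (lam + 1) ^ 2 * (p * lam ^ 2 + 4 * lam + 6 - 3 * p) * (2 - 2 * p - lam * p) ^ 2
      ≤ (lam + 3) * (4 + lam * p - 3 * p)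
        * (2 * lam + 3 - 3 * lam * p - 3 * p - lam ^ 2 * p) ^ 2 := by
  have hd : 0 < 2 * lam ^ 2 + 2 * lam + 1 := by positivity
  generalize hcdef : lam + 1 - p * (2 * lam ^ 2 + 2 * lam + 1) = c at hc
  have key : ((lam + 3) * (4 + lam * p - 3 * p)
          * (2 * lam + 3 - 3 * lam * p - 3 * p - lam ^ 2 * p) ^ 2
        - (lam + 1) ^ 2 * (p * lam ^ 2 + 4 * lam + 6 - 3 * p) * (2 - 2 * p - lam * p) ^ 2)
        * (2 * lam ^ 2 + 2 * lam + 1) ^ 3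
      = (9 * lam ^ 2 + 111 * lam ^ 3 + 541 * lam ^ 4 + 1313 * lam ^ 5 + 1638 * lam ^ 6
          + 972 * lam ^ 7 + 216 * lam ^ 8)
        + c * (24 * lam + 287 * lam ^ 2 + 1190 * lam ^ 3 + 2177 * lam ^ 4 + 1818 * lam ^ 5
          + 688 * lam ^ 6 + 96 * lam ^ 7)
        + c ^ 2 * (15 + 233 * lam + 771 * lam ^ 2 + 903 * lam ^ 3 + 478 * lam ^ 4
          + 112 * lam ^ 5 + 8 * lam ^ 6)
        + c ^ 3 * (69 + 126 * lam + 91 * lam ^ 2 + 30 * lam ^ 3 + 4 * lam ^ 4) := by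
    rw [← hcdef]; ring
  rw [← sub_nonneg, ← mul_nonneg_iff_of_pos_right (pow_pos hd 3), key]
  positivity

lemma optimal_ratio_lt_one (hlam : 0 < lam) (hp : 0 < p)
    (hc : 0 < lam + 1 - p * (2 * lam ^ 2 + 2 * lam + 1)) :
    lam * p * √(4 + lam * p - 3 * p) < (2 - 2 * p - lam * p) * √(p * (lam + 1)) := by
  have hE := two_sub_two_mul_sub_mul_pos hlam hc
  have hD : 0 ≤ 4 + lam * p - 3 * p := by nlinarith
  rw [← pow_lt_pow_iff_left₀ (by positivity) (by positivity) two_ne_zero]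
  simp only [mul_pow, sq_sqrt hD, sq_sqrt (by positivity : 0 ≤ p * (lam + 1))]
  calc lam ^ 2 * p ^ 2 * (4 + lam * p - 3 * p)
        = p * (lam ^ 2 * p * (4 + lam * p - 3 * p)) := by ring
    _ < p * ((lam + 1) * (2 - 2 * p - lam * p) ^ 2) :=
      mul_lt_mul_of_pos_left (optimal_ratio_sq_lt_one hlam hc) hp
    _ = (2 - 2 * p - lam * p) ^ 2 * (p * (lam + 1)) := by ring

lemma independent_ratio_le_optimal_ratio (hlam : 0 < lam) (hp : 0 < p)
    (hc : 0 < lam + 1 - p * (2 * lam ^ 2 + 2 * lam + 1)) :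
    lam * √(p * (lam + 1) * (p * lam ^ 2 + 4 * lam + 6 - 3 * p) * (lam + 3))
        * ((2 - 2 * p - lam * p) * √(p * (lam + 1)))
      ≤ lam * p * √(4 + lam * p - 3 * p)
        * ((lam + 3) * (2 * lam + 3 - 3 * lam * p - 3 * p - lam ^ 2 * p)) := by
  have hE := two_sub_two_mul_sub_mul_pos hlam hc
  have hD : 0 ≤ 4 + lam * p - 3 * p := by nlinarith
  have hQ : 0 ≤ p * lam ^ 2 + 4 * lam + 6 - 3 * p := by nlinarith
  have hG : 0 ≤ 2 * lam + 3 - 3 * lam * p - 3 * p - lam ^ 2 * p := by nlinarith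
  rw [← pow_le_pow_iff_left₀ (by positivity) (by positivity) two_ne_zero]
  simp only [mul_pow, sq_sqrt hD, sq_sqrt (by positivity : 0 ≤ p * (lam + 1)),
    sq_sqrt (by positivity : 0 ≤ p * (lam + 1) * (p * lam ^ 2 + 4 * lam + 6 - 3 * p) * (lam + 3))]
  calc _ = lam ^ 2 * p ^ 2 * (lam + 3)
          * ((lam + 1) ^ 2 * (p * lam ^ 2 + 4 * lam + 6 - 3 * p) * (2 - 2 * p - lam * p) ^ 2) := by
        ring
    _ ≤ lam ^ 2 * p ^ 2 * (lam + 3) * ((lam + 3) * (4 + lam * p - 3 * p)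
          * (2 * lam + 3 - 3 * lam * p - 3 * p - lam ^ 2 * p) ^ 2) :=
        mul_le_mul_of_nonneg_left (independent_ratio_sq_le_optimal_ratio_sq hlam hc)
          (by positivity)
    _ = _ := by ring

end Threshold

theorem stmt_19 (lam p : ℝ) (hlam : 0 < lam) (hp : 0 < p)
    (hp' : p < (lam + 1) / (2 * lam ^ 2 + 2 * lam + 1))
    (g h : ℝ)
    (hg : g = (lam + 3) * (2 * lam + 3 - 3 * lam * p - 3 * p - lam ^ 2 * p))
    (hh : h = lam * Real.sqrt (p * (lam + 1) * (p * lam ^ 2 + 4 * lam + 6 - 3 * p) * (lam + 3))) :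
    ((lam * p + 1) * (2 * lam + 3) * (lam + 3) / (2 * h)) * Real.log ((g + h) / (g - h))
      ≤ ((lam * p + 1) / (lam * p)) * Real.sqrt (p * (lam + 1) / (4 + lam * p - 3 * p)) *
          Real.log
            (((2 - 2 * p - lam * p) * Real.sqrt (p * (lam + 1))
                + lam * p * Real.sqrt (4 + lam * p - 3 * p)) /
              ((2 - 2 * p - lam * p) * Real.sqrt (p * (lam + 1))
                - lam * p * Real.sqrt (4 + lam * p - 3 * p))) := by
  have hc : 0 < lam + 1 - p * (2 * lam ^ 2 + 2 * lam + 1) := by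
    rw [lt_div_iff₀ (by positivity)] at hp'
    linarith
  have hE := two_sub_two_mul_sub_mul_pos hlam hc
  have hg₀ : 0 < g := by rw [hg]; nlinarith
  have hQ : 0 < p * lam ^ 2 + 4 * lam + 6 - 3 * p := by nlinarith
  have hh₀ : 0 < h := by rw [hh]; positivity
  set u := (2 - 2 * p - lam * p) * √(p * (lam + 1))
  set v := lam * p * √(4 + lam * p - 3 * p)
  have hu : 0 < u := by positivity
  have hLHS : (lam * p + 1) * (2 * lam + 3) * (lam + 3) / (2 * h) * log ((g + h) / (g - h))
      = (lam * p + 1) * (2 * lam + 3) * (lam + 3) / (2 * g)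
        * (log ((1 + h / g) / (1 - h / g)) / (h / g)) := by
    rw [← div_mul_log_add_div_sub _ _ hg₀.ne']
    field_simp
  have hRHS : (lam * p + 1) / (lam * p) * √(p * (lam + 1) / (4 + lam * p - 3 * p))
        * log ((u + v) / (u - v))
      = (lam * p + 1) / (2 - 2 * p - lam * p) * (log ((1 + v / u) / (1 - v / u)) / (v / u)) := by
    rw [← div_mul_log_add_div_sub _ _ hu.ne', sqrt_div (by positivity)]
    have huv : u / v = (2 - 2 * p - lam * p) / (lam * p)
        * (√(p * (lam + 1)) / √(4 + lam * p - 3 * p)) := mul_div_mul_comm _ _ _ _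
    rw [huv, ← mul_assoc, ← mul_assoc, div_mul_div_cancel₀ hE.ne']
  rw [hLHS, hRHS]
  have ht₁ : 0 < h / g := div_pos hh₀ hg₀
  have ht₂ : v / u < 1 := (div_lt_one hu).2 (optimal_ratio_lt_one hlam hp hc)
  have ht₁₂ : h / g ≤ v / u := by
    rw [div_le_div_iff₀ hg₀ hu, hg, hh]
    exact independent_ratio_le_optimal_ratio hlam hp hc
  refine mul_le_mul ?_ (log_one_add_div_one_sub_div_monotoneOn ⟨ht₁, ht₁₂.trans_lt ht₂⟩
    ⟨ht₁.trans_le ht₁₂, ht₂⟩ ht₁₂) ?_ (by positivity)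
  · rw [div_le_div_iff₀ (by positivity) hE, hg]
    linear_combination mul_pos (mul_pos (by positivity : 0 < lam * p + 1)
      (by positivity : 0 < lam + 3)) (mul_pos hlam hp)
  · exact div_nonneg (log_nonneg ((one_le_div (by linarith)).2 (by linarith))) ht₁.le
end
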